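/- arXiv:1308.5508 — 3 statements merged into one kernel-verified Lean document; each statement's English description precedes it below -/
import Mathlib

section
/- Let n > q ≥ 1 be coprime integers, let n/q = [b_1, …, b_l] and n/(n−q) = [a_1, …, a_k] be the Hirzebruch–Jung continued fraction expansions, let q' be the inverse of q modulo n (with 1 ≤ q' ≤ n−1), and note that n−q' is the inverse of n−q modulo n. Then γ(q/n) = −γ((n−q)/n); explicitly, (q+q')/n + Σ_{i=1}^l (b_i − 3) + ((n−q)+(n−q'))/n + Σ_{j=1}^k (a_j − 3) = 0. -/
/-!
The fractional terms always add up to `2`, so the content is the identity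
`Σ (bᵢ - 3) + Σ (aⱼ - 3) = -2` for the expansions of `x = n/q` and `y = n/(n-q)`, which are
exactly the pairs with `1/x + 1/y = 1`. If `x > 2` then `y < 2`, so `a = 2 :: u`, and passing
from `(x, y)` to `(x - 1, 1/(2 - y))` again gives such a pair, with expansions
`(b₁ - 1) :: b_tail` and `u`: one entry shorter, same value of the sum. Induction on the total
length ends at `x = y = 2`, where `b = a = [2]`.
-/

/-- Evaluation of a Hirzebruch–Jung continued fraction `[b₁, …, b_l]`,
i.e. `b₁ - 1/(b₂ - 1/(⋯ - 1/b_l))`, as a rational number. -/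
def hjEval : List ℤ → ℚ
  | [] => 0
  | b :: l => (b : ℚ) - 1 / hjEval l

@[simp]
lemma hjEval_nil : hjEval [] = 0 := rfl

@[simp]
lemma hjEval_cons (c : ℤ) (t : List ℤ) : hjEval (c :: t) = c - (hjEval t)⁻¹ := by
  simp [hjEval]

lemma one_lt_hjEval_cons {c : ℤ} {t : List ℤ} (hl : ∀ x ∈ c :: t, 2 ≤ x) :
    1 < hjEval (c :: t) := by
  induction t generalizing c with
  | nil => simpa using (show (1 : ℚ) < c by exact_mod_cast hl c List.mem_cons_self)
  | cons d s ih =>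
    have hc : (2 : ℚ) ≤ c := by exact_mod_cast hl c List.mem_cons_self
    have htail : 1 < hjEval (d :: s) := ih fun x hx => hl x (List.mem_cons_of_mem c hx)
    rw [hjEval_cons]
    linarith [inv_lt_one_of_one_lt₀ htail]

lemma inv_hjEval_nonneg {l : List ℤ} (hl : ∀ x ∈ l, 2 ≤ x) : 0 ≤ (hjEval l)⁻¹ := by
  cases l with
  | nil => simp
  | cons c t => exact inv_nonneg.mpr (zero_lt_one.trans (one_lt_hjEval_cons hl)).le

lemma inv_hjEval_lt_one {l : List ℤ} (hl : ∀ x ∈ l, 2 ≤ x) : (hjEval l)⁻¹ < 1 := by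
  cases l with
  | nil => simp
  | cons c t => exact inv_lt_one_of_one_lt₀ (one_lt_hjEval_cons hl)

lemma eq_singleton_two_of_hjEval_eq_two {l : List ℤ} (hl : ∀ x ∈ l, 2 ≤ x)
    (h : hjEval l = 2) : l = [2] := by
  obtain _ | ⟨c, t⟩ := l
  · norm_num at h
  have ht : ∀ x ∈ t, 2 ≤ x := fun x hx => hl x (List.mem_cons_of_mem c hx)
  have hr0 := inv_hjEval_nonneg ht
  have hr1 := inv_hjEval_lt_one ht
  rw [hjEval_cons] at h
  have hc : c = 2 := by
    have : (c : ℚ) < 3 := by linarith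
    have : c < 3 := by exact_mod_cast this
    linarith [hl c List.mem_cons_self]
  subst hc
  obtain _ | ⟨d, s⟩ := t
  · rfl
  · linarith [inv_pos.mpr (zero_lt_one.trans (one_lt_hjEval_cons ht))]

/-- `b` and `a` are Hirzebruch–Jung expansions of `x` and `y` with `1/x + 1/y = 1`, as for
`x = n/q` and `y = n/(n-q)`. -/
structure IsHJDual (b a : List ℤ) : Prop where
  two_le_left : ∀ x ∈ b, 2 ≤ x
  two_le_right : ∀ x ∈ a, 2 ≤ x
  inv_add_inv : (hjEval b)⁻¹ + (hjEval a)⁻¹ = 1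

def sumSubThree (l : List ℤ) : ℚ := (l.map fun x => (x : ℚ) - 3).sum

@[simp]
lemma sumSubThree_cons (c : ℤ) (t : List ℤ) : sumSubThree (c :: t) = (c - 3) + sumSubThree t := by
  simp [sumSubThree]

lemma sumSubThree_cons_sub_one_add (c : ℤ) (t u : List ℤ) :
    sumSubThree ((c - 1) :: t) + sumSubThree u = sumSubThree (c :: t) + sumSubThree (2 :: u) := by
  simp only [sumSubThree_cons]
  push_cast
  ring

namespace IsHJDual

variable {b a : List ℤ}

lemma symm (h : IsHJDual b a) : IsHJDual a b :=
  ⟨h.two_le_right, h.two_le_left, by rw [add_comm, h.inv_add_inv]⟩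

lemma one_lt_hjEval_left (h : IsHJDual b a) : 1 < hjEval b := by
  obtain _ | ⟨c, t⟩ := b
  · have := h.inv_add_inv
    simp only [hjEval_nil, inv_zero, zero_add, inv_eq_one] at this
    obtain _ | ⟨d, s⟩ := a
    · norm_num at this
    · linarith [one_lt_hjEval_cons h.two_le_right]
  · exact one_lt_hjEval_cons h.two_le_left

lemma hjEval_right_eq_two (h : IsHJDual b a) (hb : hjEval b = 2) : hjEval a = 2 := by
  have := h.inv_add_inv
  rw [hb] at this
  rw [← inv_inj, show (hjEval a)⁻¹ = 1 - 2⁻¹ by linarith]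
  norm_num

lemma two_lt_hjEval_right (h : IsHJDual b a) (hb : hjEval b < 2) : 2 < hjEval a := by
  have hx := h.one_lt_hjEval_left
  have hy := h.symm.one_lt_hjEval_left
  have : (2 : ℚ)⁻¹ < (hjEval b)⁻¹ := inv_strictAnti₀ (by linarith) hb
  rw [← inv_lt_inv₀ (by linarith) (by norm_num)]
  linarith [h.inv_add_inv]

lemma exists_cons_two_cons (h : IsHJDual b a) (hb : 2 < hjEval b) :
    ∃ c t u, b = c :: t ∧ a = 2 :: u ∧ IsHJDual ((c - 1) :: t) u := by
  obtain _ | ⟨c, t⟩ := b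
  · norm_num at hb
  obtain _ | ⟨d, u⟩ := a
  · linarith [h.symm.one_lt_hjEval_left, hjEval_nil]
  have ht : ∀ x ∈ t, 2 ≤ x := fun x hx => h.two_le_left x (List.mem_cons_of_mem c hx)
  have hu : ∀ x ∈ u, 2 ≤ x := fun x hx => h.two_le_right x (List.mem_cons_of_mem d hx)
  have hx := h.one_lt_hjEval_left
  have hy1 := h.symm.one_lt_hjEval_left
  have hdual := h.inv_add_inv
  have hxc : hjEval (c :: t) = c - (hjEval t)⁻¹ := hjEval_cons c t
  set x := hjEval (c :: t)
  have hx1 : x - 1 ≠ 0 := by linarith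
  have hy : hjEval (d :: u) = x / (x - 1) := by
    rw [eq_div_iff hx1]
    field_simp at hdual
    linear_combination -hdual
  have hc : 3 ≤ c := Int.cast_lt.mp (show (2 : ℚ) < c by linarith [inv_hjEval_nonneg ht])
  have hd : d = 2 := by
    have hy2 : x / (x - 1) < 2 := by rw [div_lt_iff₀ (by linarith)]; linarith
    have hdy : hjEval (d :: u) = d - (hjEval u)⁻¹ := hjEval_cons d u
    have : (d : ℚ) < 3 := by linarith [inv_hjEval_lt_one hu]
    have : d < 3 := by exact_mod_cast this
    linarith [h.two_le_right d List.mem_cons_self]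
  subst hd
  refine ⟨c, t, u, rfl, rfl, ?_, hu, ?_⟩
  · rintro y (_ | ⟨_, hy⟩)
    · omega
    · exact ht y hy
  · have hu2 : (hjEval u)⁻¹ = 2 - x / (x - 1) := by
      rw [hjEval_cons] at hy
      push_cast at hy
      linarith
    rw [hjEval_cons, hu2, show ((c - 1 : ℤ) : ℚ) - (hjEval t)⁻¹ = x - 1 by push_cast; linarith]
    field_simp
    ring

theorem sumSubThree_add_sumSubThree (h : IsHJDual b a) :
    sumSubThree b + sumSubThree a = -2 := by
  induction hlen : b.length + a.length using Nat.strong_induction_on generalizing b a with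
  | _ N ih =>
    rcases lt_trichotomy (hjEval b) 2 with hb | hb | hb
    · obtain ⟨c, t, u, rfl, rfl, h'⟩ := h.symm.exists_cons_two_cons (h.two_lt_hjEval_right hb)
      rw [add_comm, ← sumSubThree_cons_sub_one_add]
      exact ih _ (by simp at hlen ⊢; omega) h' rfl
    · rw [eq_singleton_two_of_hjEval_eq_two h.two_le_left hb,
        eq_singleton_two_of_hjEval_eq_two h.two_le_right (h.hjEval_right_eq_two hb)]
      norm_num [sumSubThree]
    · obtain ⟨c, t, u, rfl, rfl, h'⟩ := h.exists_cons_two_cons hb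
      rw [← sumSubThree_cons_sub_one_add]
      exact ih _ (by simp at hlen ⊢; omega) h' rfl

end IsHJDual

theorem gamma_antisymmetric_general (n q q' : ℤ) (hq1 : 1 ≤ q) (hqn : q < n)
    (b a : List ℤ) (hb2 : ∀ x ∈ b, 2 ≤ x) (ha2 : ∀ x ∈ a, 2 ≤ x)
    (hbeval : hjEval b = (n : ℚ) / (q : ℚ))
    (haeval : hjEval a = (n : ℚ) / ((n : ℚ) - (q : ℚ))) :
    (1 / 6 : ℚ) * (((q : ℚ) + (q' : ℚ)) / (n : ℚ) + (b.map (fun x => (x : ℚ) - 3)).sum)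
      = -((1 / 6 : ℚ) * ((((n : ℚ) - (q : ℚ)) + ((n : ℚ) - (q' : ℚ))) / (n : ℚ)
          + (a.map (fun x => (x : ℚ) - 3)).sum))
    ∧ ((q : ℚ) + (q' : ℚ)) / (n : ℚ) + (b.map (fun x => (x : ℚ) - 3)).sum
        + (((n : ℚ) - (q : ℚ)) + ((n : ℚ) - (q' : ℚ))) / (n : ℚ)
        + (a.map (fun x => (x : ℚ) - 3)).sum = 0 := by
  have hn : (n : ℚ) ≠ 0 := by exact_mod_cast (show n ≠ 0 by omega)
  have hnq : (n : ℚ) - q ≠ 0 := sub_ne_zero.mpr (by exact_mod_cast hqn.ne')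
  have hdual : IsHJDual b a := ⟨hb2, ha2, by rw [hbeval, haeval, inv_div, inv_div]; field_simp; ring⟩
  have hsum := hdual.sumSubThree_add_sumSubThree
  have hfrac : ((q : ℚ) + q') / n + ((n - q) + (n - q')) / n = 2 := by field_simp; ring
  unfold sumSubThree at hsum
  constructor <;> linarith

/-- Let `n > q ≥ 1` be coprime, `n/q = [b₁, …, b_l]` and `n/(n-q) = [a₁, …, a_k]` the
Hirzebruch–Jung continued fraction expansions, and `q'` the inverse of `q` mod `n` with
`1 ≤ q' ≤ n-1`.  Then `γ(q/n) = -γ((n-q)/n)`; explicitly,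
`(q+q')/n + Σ (bᵢ - 3) + ((n-q)+(n-q'))/n + Σ (aⱼ - 3) = 0`. -/
theorem gamma_antisymmetric (n q q' : ℤ) (hq1 : 1 ≤ q) (hqn : q < n)
    (hcop : IsCoprime q n)
    (hq'1 : 1 ≤ q') (hq'n : q' ≤ n - 1) (hq'inv : n ∣ q * q' - 1)
    (b a : List ℤ) (hb2 : ∀ x ∈ b, 2 ≤ x) (ha2 : ∀ x ∈ a, 2 ≤ x)
    (hbeval : hjEval b = (n : ℚ) / (q : ℚ))
    (haeval : hjEval a = (n : ℚ) / ((n : ℚ) - (q : ℚ))) :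
    (1 / 6 : ℚ) * (((q : ℚ) + (q' : ℚ)) / (n : ℚ) + (b.map (fun x => (x : ℚ) - 3)).sum)
      = -((1 / 6 : ℚ) * ((((n : ℚ) - (q : ℚ)) + ((n : ℚ) - (q' : ℚ))) / (n : ℚ)
          + (a.map (fun x => (x : ℚ) - 3)).sum))
    ∧ ((q : ℚ) + (q' : ℚ)) / (n : ℚ) + (b.map (fun x => (x : ℚ) - 3)).sum
        + (((n : ℚ) - (q : ℚ)) + ((n : ℚ) - (q' : ℚ))) / (n : ℚ)
        + (a.map (fun x => (x : ℚ) - 3)).sum = 0 :=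
  gamma_antisymmetric_general n q q' hq1 hqn b a hb2 ha2 hbeval haeval
end

section
/- Let (0; m_1, …, m_r) be a signature with g = 0, r ≤ 3 and Θ := Θ(0; m_1, …, m_r) > 0, and let ξ ≥ 1/2 be a rational number such that m_i ≤ 2(ξ/Θ + 3) for every i. Then r = 3 and for every i, m_i ≤ 6(ξ + 1 + √(ξ(ξ+2))), and in particular m_i < 12(ξ + 1). -/
/-!
Each term `1 - 1/mᵢ` is below `1`, so `Θ = -2 + Σ (1 - 1/mᵢ) > 0` forces `r = 3`.
For a triangle signature `(a, b, x)` with `Θ > 0` the pair `(a, b)` is not `(2, 2)`, hence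
`1/a + 1/b ≤ 5/6` and `Θ ≥ 1/6 - 1/x`. The hypothesis reads `(x - 6) Θ ≤ 2ξ`, so for `x > 6`
it gives `(x - 6)² ≤ 12ξx`, i.e. `x² - 12(ξ + 1)x + 36 ≤ 0`, and `x` lies below the larger
root `6(ξ + 1 + √(ξ(ξ + 2)))` of this quadratic.
-/

theorem le_six_mul_add_sqrt_of_sq_sub_six_le {x ξ : ℝ} (h : (x - 6) ^ 2 ≤ 12 * ξ * x) :
    x ≤ 6 * (ξ + 1 + √(ξ * (ξ + 2))) := by
  have hdisc : (x - 6 * (ξ + 1)) ^ 2 ≤ (6 * √(ξ * (ξ + 2))) ^ 2 := by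
    rw [mul_pow, Real.sq_sqrt (by nlinarith [sq_nonneg (x - 6 * (ξ + 1))])]
    nlinarith
  linarith [(abs_le_of_sq_le_sq' hdisc (by positivity)).2]

theorem lt_twelve_mul_of_sq_sub_six_le {K : Type*} [CommRing K] [LinearOrder K]
    [IsStrictOrderedRing K] {x ξ : K} (hx : 0 < x) (h : (x - 6) ^ 2 ≤ 12 * ξ * x) :
    x < 12 * (ξ + 1) :=
  lt_of_mul_lt_mul_right (by nlinarith) hx.le

theorem sum_map_one_sub_inv_le_length {m : List ℤ} (hm : ∀ x ∈ m, 0 ≤ x) :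
    (m.map fun x : ℤ => 1 - (x : ℚ)⁻¹).sum ≤ m.length := by
  have h : ∀ y ∈ m.map fun x : ℤ => 1 - (x : ℚ)⁻¹, y ≤ 1 := by
    simp only [List.mem_map]
    rintro _ ⟨x, hx, rfl⟩
    have : (0 : ℚ) ≤ x := by exact_mod_cast hm x hx
    linarith [inv_nonneg.mpr this]
  simpa using List.sum_le_card_nsmul _ 1 h

theorem inv_add_inv_le_five_sixths {a b : ℤ} (ha : 2 ≤ a) (hb : 2 ≤ b)
    (h : (a : ℚ)⁻¹ + (b : ℚ)⁻¹ < 1) : (a : ℚ)⁻¹ + (b : ℚ)⁻¹ ≤ 5 / 6 := by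
  have inv_le {n : ℤ} (k : ℚ) (hk : 0 < k) (hn : k ≤ n) : (n : ℚ)⁻¹ ≤ k⁻¹ := inv_anti₀ hk hn
  have ha2 := inv_le 2 two_pos (by exact_mod_cast ha)
  have hb2 := inv_le 2 two_pos (by exact_mod_cast hb)
  rcases eq_or_lt_of_le ha with rfl | ha3
  · rcases eq_or_lt_of_le hb with rfl | hb3
    · norm_num at h
    · have hb3 := inv_le 3 three_pos (by exact_mod_cast (by omega : (3 : ℤ) ≤ b))
      linarith
  · have ha3 := inv_le 3 three_pos (by exact_mod_cast (by omega : (3 : ℤ) ≤ a))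
    linarith

theorem sq_sub_six_le_of_le_two_mul_div_add_six {a b x : ℤ} {Θ ξ : ℚ} (ha : 2 ≤ a) (hb : 2 ≤ b)
    (hx : 6 < x) (hΘ : Θ = 1 - (a : ℚ)⁻¹ - (b : ℚ)⁻¹ - (x : ℚ)⁻¹) (hΘpos : 0 < Θ)
    (hw : (x : ℚ) ≤ 2 * (ξ / Θ + 3)) : ((x : ℚ) - 6) ^ 2 ≤ 12 * ξ * x := by
  have hxQ : (6 : ℚ) < x := by exact_mod_cast hx
  have hΘ_ge : 1 / 6 - (x : ℚ)⁻¹ ≤ Θ := by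
    have hxinv : 0 < (x : ℚ)⁻¹ := by positivity
    linarith [inv_add_inv_le_five_sixths ha hb (by linarith)]
  have hxΘ : ((x : ℚ) - 6) * Θ ≤ 2 * ξ :=
    (le_div_iff₀ hΘpos).mp (by rw [mul_div_assoc]; linarith)
  calc ((x : ℚ) - 6) ^ 2 = 6 * x * ((x - 6) * (1 / 6 - (x : ℚ)⁻¹)) := by field_simp
    _ ≤ 6 * x * ((x - 6) * Θ) := by gcongr
    _ ≤ 6 * x * (2 * ξ) := by gcongr
    _ = 12 * ξ * x := by ring

theorem bounds_of_sq_sub_six_le {x : ℤ} {ξ : ℚ} (hξ : 0 ≤ ξ) (hx : 0 < x)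
    (h : 6 < x → ((x : ℚ) - 6) ^ 2 ≤ 12 * ξ * x) :
    (x : ℝ) ≤ 6 * ((ξ : ℝ) + 1 + √((ξ : ℝ) * ((ξ : ℝ) + 2))) ∧ (x : ℚ) < 12 * (ξ + 1) := by
  rcases le_or_gt x 6 with hle | hgt
  · have hleR : (x : ℝ) ≤ 6 := by exact_mod_cast hle
    have hleQ : (x : ℚ) ≤ 6 := by exact_mod_cast hle
    have hξR : (0 : ℝ) ≤ ξ := by exact_mod_cast hξ
    constructor
    · nlinarith [Real.sqrt_nonneg ((ξ : ℝ) * ((ξ : ℝ) + 2))]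
    · linarith
  · have hQ := h hgt
    have hR : ((x : ℝ) - 6) ^ 2 ≤ 12 * (ξ : ℝ) * x := by exact_mod_cast hQ
    exact ⟨le_six_mul_add_sqrt_of_sq_sub_six_le hR,
      lt_twelve_mul_of_sq_sub_six_le (by exact_mod_cast hx) hQ⟩

/-- Let `(0; m₁, …, m_r)` be a signature with `g = 0`, `r ≤ 3` and
`Θ := 2g - 2 + Σ (1 - 1/mᵢ) > 0`, and let `ξ ≥ 1/2` be rational with
`mᵢ ≤ 2(ξ/Θ + 3)` for every `i`.  Then `r = 3` and for every `i`,
`mᵢ ≤ 6(ξ + 1 + √(ξ(ξ+2)))`, and in particular `mᵢ < 12(ξ + 1)`. -/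
theorem bound_mi_genus_zero (g : ℕ) (hg : g = 0) (m : List ℤ)
    (hm : ∀ x ∈ m, 2 ≤ x) (hr : m.length ≤ 3)
    (Θ : ℚ) (hΘdef : Θ = 2 * (g : ℚ) - 2 + (m.map (fun x => 1 - 1 / (x : ℚ))).sum)
    (hΘpos : 0 < Θ)
    (ξ : ℚ) (hξ : 1 / 2 ≤ ξ)
    (hwiman : ∀ x ∈ m, (x : ℚ) ≤ 2 * (ξ / Θ + 3)) :
    m.length = 3
    ∧ ∀ x ∈ m,
        (x : ℝ) ≤ 6 * ((ξ : ℝ) + 1 + Real.sqrt ((ξ : ℝ) * ((ξ : ℝ) + 2)))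
        ∧ (x : ℚ) < 12 * (ξ + 1) := by
  subst hg
  -- `m.map` in the statement runs over `m` coerced to `List ℚ` by a monadic lift.
  simp only [CharP.cast_eq_zero, mul_zero, zero_sub, one_div, List.pure_def, List.bind_eq_flatMap,
    ← List.map_eq_flatMap, List.map_map, Function.comp_def] at hΘdef
  have hlen : m.length = 3 := by
    have := sum_map_one_sub_inv_le_length fun x hx => (by linarith [hm x hx] : 0 ≤ x)
    have : 2 < m.length := by exact_mod_cast (by linarith : (2 : ℚ) < m.length)
    omega
  obtain ⟨a, b, c, rfl⟩ := List.length_eq_three.mp hlen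
  have hΘ : Θ = 1 - (a : ℚ)⁻¹ - (b : ℚ)⁻¹ - (c : ℚ)⁻¹ := by rw [hΘdef]; simp; ring
  obtain ⟨ha, hb, hc⟩ : 2 ≤ a ∧ 2 ≤ b ∧ 2 ≤ c := by simpa using hm
  have key : ∀ x ∈ [a, b, c], 6 < x → ((x : ℚ) - 6) ^ 2 ≤ 12 * ξ * x := by
    simp only [List.mem_cons, List.not_mem_nil, or_false]
    rintro x (rfl | rfl | rfl) hx6
    · exact sq_sub_six_le_of_le_two_mul_div_add_six hb hc hx6 (by rw [hΘ]; ring) hΘpos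
        (hwiman _ (by simp))
    · exact sq_sub_six_le_of_le_two_mul_div_add_six ha hc hx6 (by rw [hΘ]; ring) hΘpos
        (hwiman _ (by simp))
    · exact sq_sub_six_le_of_le_two_mul_div_add_six ha hb hx6 hΘ hΘpos (hwiman _ (by simp))
  exact ⟨rfl, fun x hx =>
    bounds_of_sq_sub_six_le (by linarith) (by linarith [hm x hx]) (key x hx)⟩
end

section
/- Let (g; m_1, …, m_r) be a signature with r ≥ 1 and Θ := Θ(g; m_1, …, m_r) > 0, set f := max(1/6, (r−3)/2), and let I, ξ be positive rational numbers such that I·ξ/(Θ·m_i) is a positive integer for every i. Then for every i, m_i ≤ (1 + I·ξ)/f. -/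
/-!
Integrality of `I·ξ/(Θ·mᵢ)` gives `Θ·mᵢ ≤ I·ξ`, so it suffices to show `f ≤ Θ + 1/mᵢ`, where
`Θ + 1/mᵢ = Θ(g; m without mᵢ) + 1`. Every term `1 - 1/mⱼ` is at least `1/2`, which gives the
bound `(r - 3)/2`. For `1/6`: if `g ≥ 1` the right side is at least `1`; if `g = 0`, positivity of
`Θ` leaves at least two other entries, and with exactly two, `b` and `c`, it forces
`1/b + 1/c < 1`, hence `1/b + 1/c ≤ 5/6`.
-/

lemma half_le_one_sub_one_div {y : ℤ} (hy : 2 ≤ y) : 1 / 2 ≤ 1 - 1 / (y : ℚ) := by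
  have : 1 / (y : ℚ) ≤ 1 / 2 := one_div_le_one_div_of_le two_pos (by exact_mod_cast hy)
  linarith

lemma one_sub_one_div_le_one {y : ℤ} (hy : 0 < y) : 1 - 1 / (y : ℚ) ≤ 1 := by
  have : 0 < 1 / (y : ℚ) := by positivity
  linarith

def signatureTheta (g : ℕ) (m : List ℤ) : ℚ :=
  2 * g - 2 + (m.map fun x : ℤ => 1 - 1 / (x : ℚ)).sum

namespace signatureTheta

lemma cons (g : ℕ) (x : ℤ) (l : List ℤ) :
    signatureTheta g (x :: l) = signatureTheta g l + (1 - 1 / (x : ℚ)) := by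
  simp only [signatureTheta, List.map_cons, List.sum_cons]
  ring

lemma perm {g : ℕ} {m m' : List ℤ} (h : m.Perm m') :
    signatureTheta g m = signatureTheta g m' := by
  rw [signatureTheta, signatureTheta, (h.map _).sum_eq]

lemma ge_half_length (g : ℕ) {l : List ℤ} (hl : ∀ y ∈ l, 2 ≤ y) :
    2 * g - 2 + l.length / 2 ≤ signatureTheta g l := by
  have := List.card_nsmul_le_sum (l.map fun x : ℤ => 1 - 1 / (x : ℚ)) (1 / 2) (by
    simp only [List.mem_map]
    rintro _ ⟨y, hy, rfl⟩
    exact half_le_one_sub_one_div (hl y hy))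
  rw [List.length_map, nsmul_eq_mul] at this
  rw [signatureTheta]
  linarith

lemma le_length (g : ℕ) {l : List ℤ} (hl : ∀ y ∈ l, 2 ≤ y) :
    signatureTheta g l ≤ 2 * g - 2 + l.length := by
  have := List.sum_le_card_nsmul (l.map fun x : ℤ => 1 - 1 / (x : ℚ)) 1 (by
    simp only [List.mem_map]
    rintro _ ⟨y, hy, rfl⟩
    exact one_sub_one_div_le_one (by linarith [hl y hy]))
  rw [List.length_map, nsmul_eq_mul, mul_one] at this
  rw [signatureTheta]
  linarith

/-- Without the binder type, `m.map (fun x => 1 - 1 / (x : ℚ))` elaborates by first coercing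
`m` to a `List ℚ`. -/
lemma eq_coe_list (g : ℕ) (m : List ℤ) :
    signatureTheta g m = 2 * (g : ℚ) - 2 + (m.map (fun x => 1 - 1 / (x : ℚ))).sum := by
  induction m with
  | nil => rfl
  | cons a l ih => simp_all [signatureTheta]

end signatureTheta

lemma one_div_add_one_div_le_five_sixths {b c : ℤ} (hb : 2 ≤ b) (hc : 2 ≤ c)
    (h : 1 / (b : ℚ) + 1 / c < 1) : 1 / (b : ℚ) + 1 / c ≤ 5 / 6 := by
  have key : ∀ {b c : ℤ}, 3 ≤ b → 2 ≤ c → 1 / (b : ℚ) + 1 / c ≤ 5 / 6 := by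
    intro b c hb hc
    have hb' : 1 / (b : ℚ) ≤ 1 / 3 :=
      one_div_le_one_div_of_le (by norm_num) (by exact_mod_cast hb)
    have hc' : 1 / (c : ℚ) ≤ 1 / 2 :=
      one_div_le_one_div_of_le (by norm_num) (by exact_mod_cast hc)
    linarith
  rcases eq_or_lt_of_le hb with rfl | hb3
  · rcases eq_or_lt_of_le hc with rfl | hc3
    · norm_num at h
    · linarith [key (b := c) (c := 2) hc3 le_rfl]
  · exact key hb3 hc

lemma one_sixth_le_signatureTheta_add_one {g : ℕ} {x : ℤ} {l : List ℤ} (hx : 2 ≤ x)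
    (hl : ∀ y ∈ l, 2 ≤ y) (hΘ : 0 < signatureTheta g (x :: l)) :
    1 / 6 ≤ signatureTheta g l + 1 := by
  have hxl : ∀ y ∈ x :: l, 2 ≤ y := List.forall_mem_cons.2 ⟨hx, hl⟩
  rcases Nat.eq_zero_or_pos g with rfl | hg
  · have hlen : 1 < l.length := by
      have := signatureTheta.le_length 0 hxl
      simp only [List.length_cons, Nat.cast_add, Nat.cast_one, Nat.cast_zero] at this
      exact_mod_cast (by linarith : (1 : ℚ) < l.length)
    rcases l with _ | ⟨b, _ | ⟨c, _ | ⟨d, l⟩⟩⟩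
    · simp at hlen
    · simp at hlen
    · -- Θ(0; x, b, c) > 0 forces 1/b + 1/c < 1, hence 1/b + 1/c ≤ 5/6.
      simp only [List.forall_mem_cons] at hl
      have hx0 : (0 : ℚ) < 1 / x := by
        have : (0 : ℚ) < x := by exact_mod_cast (by omega : (0 : ℤ) < x)
        positivity
      simp only [signatureTheta, List.map_cons, List.map_nil, List.sum_cons, List.sum_nil,
        Nat.cast_zero] at hΘ ⊢
      have := one_div_add_one_div_le_five_sixths hl.1 hl.2.1 (by linarith)
      linarith
    · have := signatureTheta.ge_half_length 0 hl
      simp only [List.length_cons, Nat.cast_add, Nat.cast_one, Nat.cast_zero] at this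
      have : (0 : ℚ) ≤ l.length := Nat.cast_nonneg _
      linarith
  · have : (1 : ℚ) ≤ g := by exact_mod_cast hg
    have : (0 : ℚ) ≤ l.length := Nat.cast_nonneg _
    linarith [signatureTheta.ge_half_length g hl]

lemma length_sub_two_div_two_le_signatureTheta_add_one (g : ℕ) {l : List ℤ}
    (hl : ∀ y ∈ l, 2 ≤ y) : ((l.length : ℚ) - 2) / 2 ≤ signatureTheta g l + 1 := by
  have : (0 : ℚ) ≤ g := Nat.cast_nonneg _
  linarith [signatureTheta.ge_half_length g hl]

lemma max_le_signatureTheta_add_inv {g : ℕ} {m : List ℤ} (hm : ∀ y ∈ m, 2 ≤ y)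
    (hΘ : 0 < signatureTheta g m) {x : ℤ} (hx : x ∈ m) :
    max (1 / 6 : ℚ) (((m.length : ℚ) - 3) / 2) ≤ signatureTheta g m + 1 / x := by
  have hperm := List.perm_cons_erase hx
  have hl : ∀ y ∈ m.erase x, 2 ≤ y := fun y hy => hm y (List.mem_of_mem_erase hy)
  have hsplit : signatureTheta g m + 1 / x = signatureTheta g (m.erase x) + 1 := by
    rw [signatureTheta.perm hperm, signatureTheta.cons]
    ring
  rw [hsplit]
  refine max_le ?_ ?_
  · rw [signatureTheta.perm hperm] at hΘ
    exact one_sixth_le_signatureTheta_add_one (hm x hx) hl hΘ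
  · have := length_sub_two_div_two_le_signatureTheta_add_one g hl
    rw [hperm.length_eq, List.length_cons, Nat.cast_succ]
    linarith

lemma le_of_div_eq_natCast {K : Type*} [Field K] [LinearOrder K] [IsStrictOrderedRing K]
    {a b : K} (ha : 0 < a) {k : ℕ} (hk : 0 < k) (h : b / a = k) : a ≤ b := by
  rw [div_eq_iff ha.ne'] at h
  rw [h]
  exact le_mul_of_one_le_left ha.le (by exact_mod_cast hk)

theorem bound_mi_via_index_general (g : ℕ) (m : List ℤ)
    (hm : ∀ x ∈ m, 2 ≤ x)
    (Θ : ℚ) (hΘdef : Θ = 2 * (g : ℚ) - 2 + (m.map (fun x => 1 - 1 / (x : ℚ))).sum)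
    (hΘpos : 0 < Θ)
    (I ξ : ℚ)
    (hdiv : ∀ x ∈ m, ∃ k : ℕ, 0 < k ∧ I * ξ / (Θ * (x : ℚ)) = (k : ℚ)) :
    ∀ x ∈ m, (x : ℚ) ≤ (1 + I * ξ) / max (1 / 6 : ℚ) (((m.length : ℚ) - 3) / 2) := by
  rw [← signatureTheta.eq_coe_list] at hΘdef
  subst hΘdef
  intro x hx
  have hx0 : (0 : ℚ) < x := by exact_mod_cast (by linarith [hm x hx] : (0 : ℤ) < x)
  obtain ⟨k, hk, hkeq⟩ := hdiv x hx
  have hΘx : signatureTheta g m * x ≤ I * ξ := le_of_div_eq_natCast (by positivity) hk hkeq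
  have hf := max_le_signatureTheta_add_inv hm hΘpos hx
  rw [le_div_iff₀ (lt_of_lt_of_le (by norm_num) (le_max_left _ _))]
  calc (x : ℚ) * max (1 / 6 : ℚ) (((m.length : ℚ) - 3) / 2)
      ≤ x * (signatureTheta g m + 1 / x) := mul_le_mul_of_nonneg_left hf hx0.le
    _ = signatureTheta g m * x + 1 := by field_simp
    _ ≤ 1 + I * ξ := by linarith

/-- Let `(g; m₁, …, m_r)` be a signature with `r ≥ 1` and
`Θ := 2g - 2 + Σ (1 - 1/mᵢ) > 0`, set `f := max(1/6, (r-3)/2)`, and let `I, ξ` be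
positive rationals such that `I·ξ/(Θ·mᵢ)` is a positive integer for every `i`.
Then for every `i`, `mᵢ ≤ (1 + I·ξ)/f`. -/
theorem bound_mi_via_index (g : ℕ) (m : List ℤ) (hr : m ≠ [])
    (hm : ∀ x ∈ m, 2 ≤ x)
    (Θ : ℚ) (hΘdef : Θ = 2 * (g : ℚ) - 2 + (m.map (fun x => 1 - 1 / (x : ℚ))).sum)
    (hΘpos : 0 < Θ)
    (I ξ : ℚ) (hI : 0 < I) (hξ : 0 < ξ)
    (hdiv : ∀ x ∈ m, ∃ k : ℕ, 0 < k ∧ I * ξ / (Θ * (x : ℚ)) = (k : ℚ)) :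
    ∀ x ∈ m, (x : ℚ) ≤ (1 + I * ξ) / max (1 / 6 : ℚ) (((m.length : ℚ) - 3) / 2) :=
  bound_mi_via_index_general g m hm Θ hΘdef hΘpos I ξ hdiv
end
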